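/- With G = 3I - (13/12)L + J and H = -I - (1/12)L + (1/2)J (L the 3×3 all-ones matrix, J the 3×3 anti-diagonal matrix), the matrix G is invertible and G - H G⁻¹ H is positive semidefinite; in fact, conjugating by the orthogonal matrix T = (1/√6)[[√3,1,√2],[0,-2,√2],[-√3,1,√2]] diagonalizes G - H G⁻¹ H with eigenvalues 7/8, 63/16, 0. -/

import Mathlib

/-!
`G` has a rational inverse, so the Schur complement `G - H G⁻¹ H` is the explicit matrix
`(7/32)·[[5, -6, 1], [-6, 12, -6], [1, -6, 5]]`. The columns of `T` are orthonormal eigenvectors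
of it for the eigenvalues `7/8, 63/16, 0`; hence it equals `T D Tᵀ` with `D` diagonal and
nonnegative, which makes it positive semidefinite.
-/

open Matrix

/-- The `3×3` all-ones matrix `L`. -/
def L3 : Matrix (Fin 3) (Fin 3) ℝ := of fun _ _ => 1

/-- The `3×3` anti-diagonal permutation matrix `J`. -/
def J3 : Matrix (Fin 3) (Fin 3) ℝ := of fun i j => if (i : ℕ) + (j : ℕ) = 2 then 1 else 0

/-- `G = 3I - (13/12)L + J`. -/
noncomputable def G3 : Matrix (Fin 3) (Fin 3) ℝ :=
  (3 : ℝ) • (1 : Matrix (Fin 3) (Fin 3) ℝ) - (13/12 : ℝ) • L3 + J3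

/-- `H = -I - (1/12)L + (1/2)J`. -/
noncomputable def H3 : Matrix (Fin 3) (Fin 3) ℝ :=
  -(1 : Matrix (Fin 3) (Fin 3) ℝ) - (1/12 : ℝ) • L3 + (1/2 : ℝ) • J3

/-- The orthogonal matrix `T = (1/√6)·[[√3, 1, √2], [0, -2, √2], [-√3, 1, √2]]`. -/
noncomputable def T3 : Matrix (Fin 3) (Fin 3) ℝ :=
  (Real.sqrt 6)⁻¹ • !![Real.sqrt 3, 1, Real.sqrt 2;
                        0, -2, Real.sqrt 2;
                        -Real.sqrt 3, 1, Real.sqrt 2]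


section UnitaryConjugation

variable {n R : Type*} [Fintype n] [DecidableEq n] [CommRing R] [StarRing R]
  {U M D : Matrix n n R}

theorem conjTranspose_mul_mul_eq_of_mul_eq_mul (hU : U ∈ unitaryGroup n R) (h : M * U = U * D) :
    Uᴴ * M * U = D := by
  rw [Matrix.mul_assoc, h, ← Matrix.mul_assoc, ← star_eq_conjTranspose,
    mem_unitaryGroup_iff'.1 hU, Matrix.one_mul]

theorem eq_mul_mul_conjTranspose_of_mul_eq_mul (hU : U ∈ unitaryGroup n R) (h : M * U = U * D) :
    M = U * D * Uᴴ := by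
  rw [← h, Matrix.mul_assoc, ← star_eq_conjTranspose, mem_unitaryGroup_iff.1 hU, Matrix.mul_one]

end UnitaryConjugation

theorem G3_eq : G3 = !![23/12, -13/12, -1/12; -13/12, 35/12, -13/12; -1/12, -13/12, 23/12] := by
  ext i j
  fin_cases i <;> fin_cases j <;> norm_num [G3, L3, J3, one_apply, Fin.ext_iff]

theorem H3_eq : H3 = !![-13/12, -1/12, 5/12; -1/12, -7/12, -1/12; 5/12, -1/12, -13/12] := by
  ext i j
  fin_cases i <;> fin_cases j <;> norm_num [H3, L3, J3, one_apply]

theorem G3_mul_eq_one :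
    G3 * !![53/72, 13/36, 17/72; 13/36, 11/18, 13/36; 17/72, 13/36, 53/72] = 1 := by
  rw [G3_eq, one_fin_three, mul_fin_three]
  norm_num

theorem G3_isUnit : IsUnit G3 :=
  (isUnit_iff_isUnit_det _).2 (isUnit_det_of_right_inverse G3_mul_eq_one)

theorem G3_sub_H3_mul_G3_inv_mul_H3_eq : G3 - H3 * G3⁻¹ * H3 =
    !![35/32, -21/16, 7/32; -21/16, 21/8, -21/16; 7/32, -21/16, 35/32] := by
  rw [inv_eq_right_inv G3_mul_eq_one, G3_eq, H3_eq, mul_fin_three, mul_fin_three]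
  ext i j
  fin_cases i <;> fin_cases j <;> norm_num

theorem T3_mem_unitaryGroup : T3 ∈ unitaryGroup (Fin 3) ℝ := by
  rw [mem_unitaryGroup_iff', star_eq_conjTranspose, conjTranspose_eq_transpose_of_trivial, T3,
    transpose_smul, smul_mul_smul_comm, ← mul_inv, Real.mul_self_sqrt (by norm_num)]
  ext i j
  fin_cases i <;> fin_cases j <;> simp [mul_apply, Fin.sum_univ_three, one_apply] <;> ring

theorem G3_sub_H3_mul_G3_inv_mul_H3_mul_T3 :
    (G3 - H3 * G3⁻¹ * H3) * T3 = T3 * diagonal ![7/8, 63/16, 0] := by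
  rw [G3_sub_H3_mul_G3_inv_mul_H3_eq, T3, mul_smul_comm, smul_mul_assoc, diagonal_vec3,
    mul_fin_three, mul_fin_three]
  congr 1
  simp only [EmbeddingLike.apply_eq_iff_eq, vecCons_inj, and_true]
  refine ⟨⟨?_, ?_, ?_⟩, ⟨?_, ?_, ?_⟩, ⟨?_, ?_, ?_⟩⟩ <;> ring

theorem stmt12 :
    IsUnit G3 ∧
    (G3 - H3 * G3⁻¹ * H3).PosSemidef ∧
    T3ᵀ * (G3 - H3 * G3⁻¹ * H3) * T3 = Matrix.diagonal ![7/8, 63/16, 0] := by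
  have hT := T3_mem_unitaryGroup
  have hMT := G3_sub_H3_mul_G3_inv_mul_H3_mul_T3
  refine ⟨G3_isUnit, ?_, ?_⟩
  · rw [eq_mul_mul_conjTranspose_of_mul_eq_mul hT hMT]
    have hD : (diagonal ![(7 : ℝ) / 8, 63 / 16, 0]).PosSemidef :=
      posSemidef_diagonal_iff.2 fun i => by fin_cases i <;> norm_num
    exact hD.mul_mul_conjTranspose_same T3
  · rw [← conjTranspose_eq_transpose_of_trivial]
    exact conjTranspose_mul_mul_eq_of_mul_eq_mul hT hMT
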